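/- arXiv:0905.3156 — 2 statements merged into one kernel-verified Lean document; each statement's English description precedes it below -/
import Mathlib

section
/- Let C be a cocomplete category and (T, μ, η) a monad on C that preserves reflexive coequalizers. For a T-algebra X with structure map ξ_X : TX → X and an object Y of C, the coproduct X ⊔ TY in the category of T-algebras is computed as the reflexive coequalizer in C of the two maps α, β : T(TX ⊔ Y) ⇉ T(X ⊔ Y), where α = μ ∘ T(T(i₁) ⊔ (T(i₂)∘η_Y)) and β = T(ξ_X ⊔ i₂); moreover this coequalizer is also the coequalizer in the category of T-algebras. -/
/-!
In `T`-algebras, `X` is the reflexive coequalizer of the Beck pair `μ, Tξ : F(TX) ⇉ FX` of free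
algebras, and the free functor `F` preserves coproducts, so `α, β : F(TX ⊔ Y) ⇉ F(X ⊔ Y)` is the
coproduct of the Beck pair with the identity pair of `FY`. A coequalizer of a coproduct of pairs
is the coproduct of their coequalizers, hence `coeq(α, β) = X ⊔ FY`. This coequalizer exists and
is computed in `C`, because the forgetful functor creates the coequalizers of reflexive pairs that
`T`, and hence `T ∘ T`, preserves.
-/

open CategoryTheory CategoryTheory.Limits
universe v u

namespace CategoryTheory

theorem IsReflexivePair.map {C D : Type*} [Category C] [Category D] (F : C ⥤ D) {A B : C}
    (f g : A ⟶ B) [IsReflexivePair f g] : IsReflexivePair (F.map f) (F.map g) :=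
  IsReflexivePair.mk' (F.map (commonSection f g))
    (by rw [← F.map_comp, section_comp_left, F.map_id])
    (by rw [← F.map_comp, section_comp_right, F.map_id])

namespace Limits

variable {D : Type*} [Category D]

noncomputable def Cofork.IsColimit.swap {A B X : D} {f g : A ⟶ B} {π : B ⟶ X}
    {w : f ≫ π = g ≫ π} (h : IsColimit (Cofork.ofπ π w)) : IsColimit (Cofork.ofπ π w.symm) :=
  Cofork.IsColimit.mk _ (fun s => Cofork.IsColimit.desc h s.π s.condition.symm)
    (fun s => Cofork.IsColimit.π_desc' h s.π s.condition.symm)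
    (fun _ _ hm => Cofork.IsColimit.hom_ext h (hm.trans (Cofork.IsColimit.π_desc' h _ _).symm))

namespace BinaryCofan.IsColimit

variable {X Y P W : D} {inl : X ⟶ P} {inr : Y ⟶ P}

theorem hom_ext_mk (h : IsColimit (BinaryCofan.mk inl inr)) {u v : P ⟶ W}
    (hl : inl ≫ u = inl ≫ v) (hr : inr ≫ u = inr ≫ v) : u = v :=
  BinaryCofan.IsColimit.hom_ext h hl hr

noncomputable def descMk (h : IsColimit (BinaryCofan.mk inl inr)) (a : X ⟶ W) (b : Y ⟶ W) :
    P ⟶ W :=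
  h.desc (BinaryCofan.mk a b)

theorem inl_descMk (h : IsColimit (BinaryCofan.mk inl inr)) (a : X ⟶ W) (b : Y ⟶ W) :
    inl ≫ descMk h a b = a :=
  h.fac _ ⟨.left⟩

theorem inr_descMk (h : IsColimit (BinaryCofan.mk inl inr)) (a : X ⟶ W) (b : Y ⟶ W) :
    inr ≫ descMk h a b = b :=
  h.fac _ ⟨.right⟩

end BinaryCofan.IsColimit

open BinaryCofan.IsColimit

section CoprodCoequalizer

/- Throughout, `P₁` and `P₀` are coproducts `A₁ ⊔ Y` and `A₀ ⊔ Y`, and the hypotheses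
`hf hg hf' hg'` say that `f = f₁ ⊔ 𝟙 Y` and `g = g₁ ⊔ 𝟙 Y`. -/
variable {A₁ A₀ Y P₁ P₀ X Q : D} {f₁ g₁ : A₁ ⟶ A₀} {inl₁ : A₁ ⟶ P₁} {inr₁ : Y ⟶ P₁}
  {inl₀ : A₀ ⟶ P₀} {inr₀ : Y ⟶ P₀} {f g : P₁ ⟶ P₀} {π₁ : A₀ ⟶ X} {π : P₀ ⟶ Q}

theorem isReflexivePair_of_isColimit_binaryCofan (hf : inl₁ ≫ f = f₁ ≫ inl₀)
    (hg : inl₁ ≫ g = g₁ ≫ inl₀) (hf' : inr₁ ≫ f = inr₀) (hg' : inr₁ ≫ g = inr₀)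
    (h₀ : IsColimit (BinaryCofan.mk inl₀ inr₀)) [IsReflexivePair f₁ g₁] : IsReflexivePair f g := by
  obtain ⟨r, hr₁, hr₂⟩ := IsReflexivePair.common_section f₁ g₁
  refine IsReflexivePair.mk' (descMk h₀ (r ≫ inl₁) inr₁) ?_ ?_ <;> refine hom_ext_mk h₀ ?_ ?_
  · rw [reassoc_of% inl_descMk h₀, Category.assoc, hf, reassoc_of% hr₁, Category.comp_id]
  · rw [reassoc_of% inr_descMk h₀, hf', Category.comp_id]
  · rw [reassoc_of% inl_descMk h₀, Category.assoc, hg, reassoc_of% hr₂, Category.comp_id]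
  · rw [reassoc_of% inr_descMk h₀, hg', Category.comp_id]

noncomputable def coequalizerCoprodInl (hf : inl₁ ≫ f = f₁ ≫ inl₀) (hg : inl₁ ≫ g = g₁ ≫ inl₀)
    {w₁ : f₁ ≫ π₁ = g₁ ≫ π₁} (hX : IsColimit (Cofork.ofπ π₁ w₁)) (w : f ≫ π = g ≫ π) :
    X ⟶ Q :=
  Cofork.IsColimit.desc hX (inl₀ ≫ π) (by rw [← reassoc_of% hf, ← reassoc_of% hg, w])

theorem π_coequalizerCoprodInl (hf : inl₁ ≫ f = f₁ ≫ inl₀) (hg : inl₁ ≫ g = g₁ ≫ inl₀)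
    {w₁ : f₁ ≫ π₁ = g₁ ≫ π₁} (hX : IsColimit (Cofork.ofπ π₁ w₁)) (w : f ≫ π = g ≫ π) :
    π₁ ≫ coequalizerCoprodInl hf hg hX w = inl₀ ≫ π :=
  Cofork.IsColimit.π_desc' hX _ _

theorem comp_descMk_eq_comp_descMk (hf : inl₁ ≫ f = f₁ ≫ inl₀) (hg : inl₁ ≫ g = g₁ ≫ inl₀)
    (hf' : inr₁ ≫ f = inr₀) (hg' : inr₁ ≫ g = inr₀) (w₁ : f₁ ≫ π₁ = g₁ ≫ π₁)
    (h₁ : IsColimit (BinaryCofan.mk inl₁ inr₁)) (h₀ : IsColimit (BinaryCofan.mk inl₀ inr₀))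
    {W : D} (a : X ⟶ W) (b : Y ⟶ W) :
    f ≫ descMk h₀ (π₁ ≫ a) b = g ≫ descMk h₀ (π₁ ≫ a) b := by
  refine hom_ext_mk h₁ ?_ ?_
  · rw [reassoc_of% hf, reassoc_of% hg, inl_descMk, reassoc_of% w₁]
  · rw [reassoc_of% hf', reassoc_of% hg']

theorem coequalizerCoprod_hom_ext (hf : inl₁ ≫ f = f₁ ≫ inl₀) (hg : inl₁ ≫ g = g₁ ≫ inl₀)
    (h₀ : IsColimit (BinaryCofan.mk inl₀ inr₀)) {w₁ : f₁ ≫ π₁ = g₁ ≫ π₁}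
    (hX : IsColimit (Cofork.ofπ π₁ w₁)) {w : f ≫ π = g ≫ π} (hQ : IsColimit (Cofork.ofπ π w))
    {W : D} {u v : Q ⟶ W}
    (hl : coequalizerCoprodInl hf hg hX w ≫ u = coequalizerCoprodInl hf hg hX w ≫ v)
    (hr : (inr₀ ≫ π) ≫ u = (inr₀ ≫ π) ≫ v) : u = v := by
  refine Cofork.IsColimit.hom_ext hQ (hom_ext_mk h₀ ?_ ?_ : π ≫ u = π ≫ v)
  · simp only [← reassoc_of% (π_coequalizerCoprodInl hf hg hX w), hl]
  · simpa only [Category.assoc] using hr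

noncomputable def isColimitCoequalizerCoprod (hf : inl₁ ≫ f = f₁ ≫ inl₀)
    (hg : inl₁ ≫ g = g₁ ≫ inl₀) (hf' : inr₁ ≫ f = inr₀) (hg' : inr₁ ≫ g = inr₀)
    (h₁ : IsColimit (BinaryCofan.mk inl₁ inr₁)) (h₀ : IsColimit (BinaryCofan.mk inl₀ inr₀))
    {w₁ : f₁ ≫ π₁ = g₁ ≫ π₁} (hX : IsColimit (Cofork.ofπ π₁ w₁))
    {w : f ≫ π = g ≫ π} (hQ : IsColimit (Cofork.ofπ π w)) :
    IsColimit (BinaryCofan.mk (coequalizerCoprodInl hf hg hX w) (inr₀ ≫ π)) := by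
  let desc {W : D} (a : X ⟶ W) (b : Y ⟶ W) : Q ⟶ W :=
    Cofork.IsColimit.desc hQ (descMk h₀ (π₁ ≫ a) b)
      (comp_descMk_eq_comp_descMk hf hg hf' hg' w₁ h₁ h₀ a b)
  have π_desc {W : D} (a : X ⟶ W) (b : Y ⟶ W) : π ≫ desc a b = descMk h₀ (π₁ ≫ a) b :=
    Cofork.IsColimit.π_desc' hQ _ _
  have inl_desc {W : D} (a : X ⟶ W) (b : Y ⟶ W) :
      coequalizerCoprodInl hf hg hX w ≫ desc a b = a :=
    Cofork.IsColimit.hom_ext hX (by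
      rw [reassoc_of% (π_coequalizerCoprodInl hf hg hX w), π_desc, inl_descMk] :
        π₁ ≫ _ = π₁ ≫ a)
  have inr_desc {W : D} (a : X ⟶ W) (b : Y ⟶ W) : (inr₀ ≫ π) ≫ desc a b = b := by
    rw [Category.assoc, π_desc, inr_descMk]
  exact BinaryCofan.IsColimit.mk _ desc inl_desc inr_desc fun a b _ hl hr =>
    coequalizerCoprod_hom_ext hf hg h₀ hX hQ (hl.trans (inl_desc a b).symm)
      (hr.trans (inr_desc a b).symm)

end CoprodCoequalizer

end Limits

namespace Monad

variable {C : Type u} [Category.{v} C] {T : Monad C}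

theorem preservesColimit_parallelPair_comp {D E : Type*} [Category.{v} D] [Category E]
    (F : C ⥤ D) [PreservesColimitOfIsReflexivePair F] {A B : E} (f g : A ⟶ B)
    [IsReflexivePair f g] (G : E ⥤ C) : PreservesColimit (parallelPair f g ⋙ G) F :=
  haveI : IsReflexivePair ((parallelPair f g ⋙ G).map WalkingParallelPairHom.left)
      ((parallelPair f g ⋙ G).map WalkingParallelPairHom.right) := IsReflexivePair.map G f g
  preservesColimit_of_iso_diagram F (diagramIsoParallelPair _).symm

noncomputable instance forgetCreatesReflexiveCoequalizer
    [PreservesColimitOfIsReflexivePair (T : C ⥤ C)] {A B : T.Algebra} (f g : A ⟶ B)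
    [IsReflexivePair f g] : CreatesColimit (parallelPair f g) T.forget :=
  haveI := preservesColimit_parallelPair_comp (T : C ⥤ C) f g T.forget
  haveI : PreservesColimit ((parallelPair f g ⋙ T.forget) ⋙ (T : C ⥤ C)) (T : C ⥤ C) :=
    preservesColimit_parallelPair_comp (T : C ⥤ C) f g (T.forget ⋙ (T : C ⥤ C))
  forgetCreatesColimit _

variable [HasBinaryCoproducts C]

noncomputable def isColimitFreeCoprod (A B : C) :
    IsColimit (BinaryCofan.mk (T.free.map (coprod.inl : A ⟶ A ⨿ B)) (T.free.map coprod.inr)) :=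
  haveI := T.adj.leftAdjoint_preservesColimits
  isColimitOfHasBinaryCoproductOfPreservesColimit T.free A B

namespace CoprodFreeCoequalizer

variable (X : T.Algebra) (Y : C)

noncomputable def bottomMap : T.free.obj (T.obj X.A ⨿ Y) ⟶ T.free.obj (X.A ⨿ Y) where
  f := T.map (coprod.desc (T.map coprod.inl) (T.η.app Y ≫ T.map coprod.inr)) ≫ T.μ.app (X.A ⨿ Y)
  h := by
    show T.map (T.map _ ≫ T.μ.app _) ≫ T.μ.app _ = T.μ.app _ ≫ T.map _ ≫ T.μ.app _
    rw [T.map_comp, Category.assoc, T.assoc, T.mu_naturality_assoc]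

noncomputable def topMap : T.free.obj (T.obj X.A ⨿ Y) ⟶ T.free.obj (X.A ⨿ Y) :=
  T.free.map (coprod.desc (X.a ≫ coprod.inl) coprod.inr)

theorem free_map_inl_comp_bottomMap :
    T.free.map coprod.inl ≫ bottomMap X Y =
      FreeCoequalizer.bottomMap X ≫ T.free.map coprod.inl := by
  ext
  show T.map coprod.inl ≫ T.map (coprod.desc (T.map coprod.inl) (T.η.app Y ≫ T.map coprod.inr)) ≫
    T.μ.app (X.A ⨿ Y) = T.μ.app X.A ≫ T.map coprod.inl
  rw [← T.map_comp_assoc, coprod.inl_desc, T.mu_naturality]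

theorem free_map_inr_comp_bottomMap :
    T.free.map coprod.inr ≫ bottomMap X Y = T.free.map coprod.inr := by
  ext
  show T.map coprod.inr ≫ T.map (coprod.desc (T.map coprod.inl) (T.η.app Y ≫ T.map coprod.inr)) ≫
    T.μ.app (X.A ⨿ Y) = T.map coprod.inr
  rw [← T.map_comp_assoc, coprod.inr_desc, T.map_comp, Category.assoc, T.mu_naturality]
  simp

theorem free_map_inl_comp_topMap :
    T.free.map coprod.inl ≫ topMap X Y = FreeCoequalizer.topMap X ≫ T.free.map coprod.inl := by
  ext
  show T.map coprod.inl ≫ T.map (coprod.desc (X.a ≫ coprod.inl) coprod.inr) =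
    T.map X.a ≫ T.map coprod.inl
  rw [← T.map_comp, coprod.inl_desc, T.map_comp]

theorem free_map_inr_comp_topMap : T.free.map coprod.inr ≫ topMap X Y = T.free.map coprod.inr := by
  ext
  show T.map coprod.inr ≫ T.map (coprod.desc (X.a ≫ coprod.inl) coprod.inr) = T.map coprod.inr
  rw [← T.map_comp, coprod.inr_desc]

instance isReflexivePair_bottomMap_topMap : IsReflexivePair (bottomMap X Y) (topMap X Y) :=
  haveI := IsReflexivePair.swap (f := FreeCoequalizer.topMap X) (g := FreeCoequalizer.bottomMap X)
  isReflexivePair_of_isColimit_binaryCofan (free_map_inl_comp_bottomMap X Y)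
    (free_map_inl_comp_topMap X Y) (free_map_inr_comp_bottomMap X Y) (free_map_inr_comp_topMap X Y)
    (isColimitFreeCoprod _ _)

end CoprodFreeCoequalizer

end Monad

end CategoryTheory

/-- Let `C` be cocomplete and `(T, μ, η)` a monad on `C`
preserving reflexive coequalizers.  For a `T`-algebra `X` (structure map
`ξ_X : TX → X`) and an object `Y` of `C`, the coproduct `X ⊔ TY` in the
category of `T`-algebras is computed as the reflexive coequalizer in `C` of the
two maps `α, β : T(TX ⊔ Y) ⇉ T(X ⊔ Y)`, where
`α = μ ∘ T(T(i₁) ⊔ (T(i₂)∘η_Y))` and `β = T(ξ_X ⊔ i₂)`; moreover this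
coequalizer is also the coequalizer of the diagram in the category of
`T`-algebras. -/
theorem coproduct_algebra_free_as_reflexive_coequalizer
    {C : Type u} [Category.{v} C] [HasColimits C] (T : Monad C)
    (hT : ∀ {A B : C} (f g : A ⟶ B), IsReflexivePair f g →
      Nonempty (PreservesColimit (parallelPair f g) T.toFunctor))
    (X : T.Algebra) (Y : C) :
    letI α : T.obj (T.obj X.A ⨿ Y) ⟶ T.obj (X.A ⨿ Y) :=
      T.map (coprod.desc (T.map coprod.inl) (T.η.app Y ≫ T.map coprod.inr)) ≫
        T.μ.app (X.A ⨿ Y)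
    letI β : T.obj (T.obj X.A ⨿ Y) ⟶ T.obj (X.A ⨿ Y) :=
      T.map (coprod.desc (X.a ≫ coprod.inl) coprod.inr)
    IsReflexivePair α β ∧
    ∃ (P : T.Algebra)
      (π : T.obj (X.A ⨿ Y) ⟶ P.A) (hw : α ≫ π = β ≫ π)
      (j₁ : X ⟶ P) (j₂ : T.free.obj Y ⟶ P),
      -- `P.A` together with `π` is the (reflexive) coequalizer of `α, β` in `C`
      Nonempty (IsColimit (Cofork.ofπ π hw)) ∧
      -- `P` is the coproduct `X ⊔ TY` in the category of `T`-algebras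
      Nonempty (IsColimit (BinaryCofan.mk j₁ j₂)) ∧
      -- moreover the coequalizer diagram lifts to `T`-algebras and `P` is also
      -- the coequalizer there
      ∃ (αA βA : T.free.obj (T.obj X.A ⨿ Y) ⟶ T.free.obj (X.A ⨿ Y))
        (πA : T.free.obj (X.A ⨿ Y) ⟶ P),
        αA.f = α ∧ βA.f = β ∧ πA.f = π ∧
        ∃ hwA : αA ≫ πA = βA ≫ πA,
          Nonempty (IsColimit (Cofork.ofπ πA hwA)) := by
  open Monad Monad.CoprodFreeCoequalizer in
  have : PreservesColimitOfIsReflexivePair (T : C ⥤ C) := ⟨fun _ _ f g h => (hT f g h).some⟩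
  have : HasCoequalizer (bottomMap X Y) (topMap X Y) := hasColimit_of_created _ T.forget
  have hP := coequalizerIsCoequalizer (bottomMap X Y) (topMap X Y)
  exact ⟨IsReflexivePair.map T.forget (bottomMap X Y) (topMap X Y), coequalizer _ _,
    T.forget.map (coequalizer.π (bottomMap X Y) (topMap X Y)),
    T.forget.congr_map (coequalizer.condition (bottomMap X Y) (topMap X Y)), _, _,
    ⟨(isColimitMapCoconeCoforkEquiv T.forget _).1 (isColimitOfPreserves T.forget hP)⟩,
    ⟨isColimitCoequalizerCoprod (free_map_inl_comp_bottomMap X Y) (free_map_inl_comp_topMap X Y)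
      (free_map_inr_comp_bottomMap X Y) (free_map_inr_comp_topMap X Y) (isColimitFreeCoprod _ _)
      (isColimitFreeCoprod _ _) (Cofork.IsColimit.swap (beckAlgebraCoequalizer X)) hP⟩,
    bottomMap X Y, topMap X Y, coequalizer.π _ _, rfl, rfl, rfl, coequalizer.condition _ _, ⟨hP⟩⟩
end

section
/- Composition and equivalence classes in the group completion D⁻¹D are well defined: given morphisms [(s, α, β)] : (a,b) → (c,d) and [(t, α', β')] : (c,d) → (e,f) in D⁻¹D, the composite [(s⊕t, α'∘(α⊕id_t), β'∘(β⊕id_t))] is independent of the choice of representatives, composition is associative, and [(0, id, id)] is the identity; hence D⁻¹D is a category. -/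
/-!
A permutative category is a category `C` with a strictly associative tensor
`⊗ : C × C → C`, a strict two-sided unit `1`, and a natural symmetry
isomorphism `γ : x⊗y → y⊗x` satisfying `γ∘γ = id`, `γ_{x,1} = id` (after the
identifications `x⊗1 = x = 1⊗x`), and the hexagon-collapse condition
`γ_{x⊗y,z} = (γ_{x,z}⊗id_y)∘(id_x⊗γ_{y,z})`.
-/

open CategoryTheory

universe v u

structure Permutative (C : Type u) [Category.{v} C] where
  tensor : C → C → C
  tensorHom : ∀ {X X' Y Y' : C}, (X ⟶ X') → (Y ⟶ Y') → (tensor X Y ⟶ tensor X' Y')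
  unit : C
  tensorHom_id : ∀ (X Y : C), tensorHom (𝟙 X) (𝟙 Y) = 𝟙 (tensor X Y)
  tensorHom_comp : ∀ {X X' X'' Y Y' Y'' : C} (f : X ⟶ X') (f' : X' ⟶ X'')
      (g : Y ⟶ Y') (g' : Y' ⟶ Y''),
      tensorHom (f ≫ f') (g ≫ g') = tensorHom f g ≫ tensorHom f' g'
  assoc : ∀ X Y Z : C, tensor (tensor X Y) Z = tensor X (tensor Y Z)
  tensorHom_assoc : ∀ {X X' Y Y' Z Z' : C} (f : X ⟶ X') (g : Y ⟶ Y') (h : Z ⟶ Z'),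
      tensorHom (tensorHom f g) h =
        eqToHom (assoc X Y Z) ≫ tensorHom f (tensorHom g h) ≫ eqToHom (assoc X' Y' Z').symm
  unit_left : ∀ X : C, tensor unit X = X
  unit_right : ∀ X : C, tensor X unit = X
  tensorHom_unit_left : ∀ {X X' : C} (f : X ⟶ X'),
      tensorHom (𝟙 unit) f = eqToHom (unit_left X) ≫ f ≫ eqToHom (unit_left X').symm
  tensorHom_unit_right : ∀ {X X' : C} (f : X ⟶ X'),
      tensorHom f (𝟙 unit) = eqToHom (unit_right X) ≫ f ≫ eqToHom (unit_right X').symm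
  γ : ∀ X Y : C, tensor X Y ⟶ tensor Y X
  γ_natural : ∀ {X X' Y Y' : C} (f : X ⟶ X') (g : Y ⟶ Y'),
      tensorHom f g ≫ γ X' Y' = γ X Y ≫ tensorHom g f
  γ_γ : ∀ X Y : C, γ X Y ≫ γ Y X = 𝟙 (tensor X Y)
  γ_unit : ∀ X : C, γ X unit =
      eqToHom ((unit_right X).trans (unit_left X).symm)
  hexagon : ∀ X Y Z : C, γ (tensor X Y) Z =
      eqToHom (assoc X Y Z) ≫ tensorHom (𝟙 X) (γ Y Z) ≫
        eqToHom (assoc X Z Y).symm ≫ tensorHom (γ X Z) (𝟙 Y) ≫ eqToHom (assoc Z X Y)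


variable {D : Type u} [Category.{v} D]

/-- Objects of the Grayson–Quillen group completion `D⁻¹D`: pairs `(a,b)` of
objects of `D`, thought of as formal differences `b - a`. -/
structure GCObj (D : Type u) where
  fst : D
  snd : D

/-- Representatives of morphisms `(a,b) → (c,d)` in `D⁻¹D`: triples
`(s, α : a⊕s → c, β : b⊕s → d)`. -/
structure GCPre (P : Permutative D) (a b c d : D) where
  s : D
  α : P.tensor a s ⟶ c
  β : P.tensor b s ⟶ d

/-- The equivalence relation on representatives: `(s,α,β) ∼ (s',α',β')` iff
there is `γ : s → s'` with `α'∘(id_a⊕γ) = α` and `β'∘(id_b⊕γ) = β`. -/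
def GCRel (P : Permutative D) {a b c d : D} (p p' : GCPre P a b c d) : Prop :=
  ∃ γ : p.s ⟶ p'.s,
    P.tensorHom (𝟙 a) γ ≫ p'.α = p.α ∧ P.tensorHom (𝟙 b) γ ≫ p'.β = p.β

/-- Morphisms of `D⁻¹D`: equivalence classes of representatives. -/
def GCHom (P : Permutative D) (a b c d : D) : Type _ :=
  Quot (@GCRel D _ P a b c d)

/-- Composition of representatives:
`(s,α,β) ∘ (t,α',β') = (s⊕t, α'∘(α⊕id_t), β'∘(β⊕id_t))` (using strict
associativity of `⊕`). -/
def GCcompPre (P : Permutative D) {a b c d e f : D}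
    (p : GCPre P a b c d) (q : GCPre P c d e f) : GCPre P a b e f where
  s := P.tensor p.s q.s
  α := eqToHom (P.assoc a p.s q.s).symm ≫ P.tensorHom p.α (𝟙 q.s) ≫ q.α
  β := eqToHom (P.assoc b p.s q.s).symm ≫ P.tensorHom p.β (𝟙 q.s) ≫ q.β

/-- The identity representative `(0, id, id)`. -/
def GCidPre (P : Permutative D) (a b : D) : GCPre P a b a b where
  s := P.unit
  α := eqToHom (P.unit_right a)
  β := eqToHom (P.unit_right b)

/-!
Call `γ : s ⟶ s'` a morphism of representatives when it witnesses `(s,α,β) ∼ (s',α',β')`.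
Composition of representatives is functorial in such morphisms (`γ ⊕ δ` relates the
composites), and the associativity and unit laws hold up to the morphisms of representatives
given by the strict identities `(s⊕t)⊕u = s⊕(t⊕u)` and `0⊕s = s = s⊕0`.
-/

namespace Permutative

variable (P : Permutative D)

lemma tensorHom_eqToHom {X X' Y Y' : D} (hX : X = X') (hY : Y = Y') :
    P.tensorHom (eqToHom hX) (eqToHom hY) = eqToHom (by rw [hX, hY]) := by
  subst hX hY
  exact P.tensorHom_id _ _

lemma tensorHom_id_eqToHom (X : D) {Y Y' : D} (hY : Y = Y') :
    P.tensorHom (𝟙 X) (eqToHom hY) = eqToHom (by rw [hY]) :=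
  P.tensorHom_eqToHom rfl hY

lemma tensorHom_eqToHom_id {X X' : D} (hX : X = X') (Y : D) :
    P.tensorHom (eqToHom hX) (𝟙 Y) = eqToHom (by rw [hX]) :=
  P.tensorHom_eqToHom hX rfl

/-- One leg of the composite of representatives, `y ∘ (x ⊕ id_t)`. -/
def compLeg {a c e s t : D} (x : P.tensor a s ⟶ c) (y : P.tensor c t ⟶ e) :
    P.tensor a (P.tensor s t) ⟶ e :=
  eqToHom (P.assoc a s t).symm ≫ P.tensorHom x (𝟙 t) ≫ y

lemma tensorHom_id_tensorHom_comp_compLeg {a c e s s' t t' : D} (γ : s ⟶ s') (δ : t ⟶ t')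
    {x : P.tensor a s ⟶ c} {x' : P.tensor a s' ⟶ c}
    {y : P.tensor c t ⟶ e} {y' : P.tensor c t' ⟶ e}
    (hx : P.tensorHom (𝟙 a) γ ≫ x' = x) (hy : P.tensorHom (𝟙 c) δ ≫ y' = y) :
    P.tensorHom (𝟙 a) (P.tensorHom γ δ) ≫ P.compLeg x' y' = P.compLeg x y := by
  have hassoc : P.tensorHom (𝟙 a) (P.tensorHom γ δ) =
      eqToHom (P.assoc a s t).symm ≫ P.tensorHom (P.tensorHom (𝟙 a) γ) δ ≫
        eqToHom (P.assoc a s' t') := by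
    simp [P.tensorHom_assoc]
  have hinterchange : P.tensorHom (P.tensorHom (𝟙 a) γ) δ ≫ P.tensorHom x' (𝟙 t') =
      P.tensorHom x (𝟙 t) ≫ P.tensorHom (𝟙 c) δ := by
    rw [← P.tensorHom_comp, ← P.tensorHom_comp, hx]
    simp
  simp only [compLeg, hassoc, Category.assoc, eqToHom_trans_assoc, eqToHom_refl,
    Category.id_comp]
  rw [reassoc_of% hinterchange, hy]

lemma compLeg_compLeg {a c e g s t u : D}
    (x : P.tensor a s ⟶ c) (y : P.tensor c t ⟶ e) (z : P.tensor e u ⟶ g) :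
    P.tensorHom (𝟙 a) (eqToHom (P.assoc s t u)) ≫ P.compLeg x (P.compLeg y z) =
      P.compLeg (P.compLeg x y) z := by
  have hsplit : P.tensorHom (P.compLeg x y) (𝟙 u) =
      P.tensorHom (eqToHom (P.assoc a s t).symm) (𝟙 u) ≫
        P.tensorHom (P.tensorHom x (𝟙 t)) (𝟙 u) ≫ P.tensorHom y (𝟙 u) := by
    rw [← P.tensorHom_comp, ← P.tensorHom_comp]
    simp [compLeg]
  conv_rhs => rw [compLeg, hsplit]
  rw [P.tensorHom_assoc, P.tensorHom_id, tensorHom_id_eqToHom, tensorHom_eqToHom_id]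
  simp [compLeg]

lemma compLeg_unit_left {a c s : D} (x : P.tensor a s ⟶ c) :
    P.tensorHom (𝟙 a) (eqToHom (P.unit_left s)) ≫ x =
      P.compLeg (eqToHom (P.unit_right a)) x := by
  simp [compLeg, tensorHom_id_eqToHom, tensorHom_eqToHom_id]

lemma compLeg_unit_right {a c s : D} (x : P.tensor a s ⟶ c) :
    P.tensorHom (𝟙 a) (eqToHom (P.unit_right s)) ≫ x =
      P.compLeg x (eqToHom (P.unit_right c)) := by
  simp [compLeg, tensorHom_id_eqToHom, P.tensorHom_unit_right]

end Permutative

section GroupCompletion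

variable (P : Permutative D)

lemma GCRel.refl {a b c d : D} (p : GCPre P a b c d) : GCRel P p p :=
  ⟨𝟙 p.s, by simp [P.tensorHom_id], by simp [P.tensorHom_id]⟩

variable {P}

lemma GCRel.comp {a b c d e f : D} {p p' : GCPre P a b c d} {q q' : GCPre P c d e f}
    (hp : GCRel P p p') (hq : GCRel P q q') :
    GCRel P (GCcompPre P p q) (GCcompPre P p' q') := by
  obtain ⟨γ, hγα, hγβ⟩ := hp
  obtain ⟨δ, hδα, hδβ⟩ := hq
  exact ⟨P.tensorHom γ δ, P.tensorHom_id_tensorHom_comp_compLeg γ δ hγα hδα,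
    P.tensorHom_id_tensorHom_comp_compLeg γ δ hγβ hδβ⟩

variable (P)

lemma GCRel_compPre_assoc {a b c d e f g h : D}
    (p : GCPre P a b c d) (q : GCPre P c d e f) (r : GCPre P e f g h) :
    GCRel P (GCcompPre P (GCcompPre P p q) r) (GCcompPre P p (GCcompPre P q r)) :=
  ⟨eqToHom (P.assoc p.s q.s r.s), P.compLeg_compLeg p.α q.α r.α,
    P.compLeg_compLeg p.β q.β r.β⟩

lemma GCRel_idPre_compPre {a b c d : D} (p : GCPre P a b c d) :
    GCRel P (GCcompPre P (GCidPre P a b) p) p :=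
  ⟨eqToHom (P.unit_left p.s), P.compLeg_unit_left p.α, P.compLeg_unit_left p.β⟩

lemma GCRel_compPre_idPre {a b c d : D} (p : GCPre P a b c d) :
    GCRel P (GCcompPre P p (GCidPre P c d)) p :=
  ⟨eqToHom (P.unit_right p.s), P.compLeg_unit_right p.α, P.compLeg_unit_right p.β⟩

def GCHom.comp {a b c d e f : D} : GCHom P a b c d → GCHom P c d e f → GCHom P a b e f :=
  Quot.map₂ (GCcompPre P) (fun p _ _ hq => (GCRel.refl P p).comp hq)
    (fun _ _ q hp => hp.comp (GCRel.refl P q))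

abbrev groupCompletionCategory : Category.{max u v} (GCObj D) where
  Hom X Y := GCHom P X.fst X.snd Y.fst Y.snd
  id X := Quot.mk _ (GCidPre P X.fst X.snd)
  comp := GCHom.comp P
  id_comp f := Quot.inductionOn f fun p => Quot.sound (GCRel_idPre_compPre P p)
  comp_id f := Quot.inductionOn f fun p => Quot.sound (GCRel_compPre_idPre P p)
  assoc f g h := Quot.induction_on₃ f g h fun p q r => Quot.sound (GCRel_compPre_assoc P p q r)

end GroupCompletion

/-- composition and equivalence classes in the group completion
`D⁻¹D` are well defined: the composite class is independent of the choice of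
representatives, composition is associative, and `[(0,id,id)]` is the
identity; hence `D⁻¹D` is a category. -/
theorem groupCompletion_is_category (P : Permutative D) :
    -- composition descends to equivalence classes
    (∀ (a b c d e f : D) (p p' : GCPre P a b c d) (q q' : GCPre P c d e f),
        GCRel P p p' → GCRel P q q' →
        (Quot.mk _ (GCcompPre P p q) : GCHom P a b e f) =
          Quot.mk _ (GCcompPre P p' q')) ∧
    -- associativity
    (∀ (a b c d e f g h : D) (p : GCPre P a b c d) (q : GCPre P c d e f)
        (r : GCPre P e f g h),
        (Quot.mk _ (GCcompPre P (GCcompPre P p q) r) : GCHom P a b g h) =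
          Quot.mk _ (GCcompPre P p (GCcompPre P q r))) ∧
    -- identities
    (∀ (a b c d : D) (p : GCPre P a b c d),
        (Quot.mk _ (GCcompPre P (GCidPre P a b) p) : GCHom P a b c d) =
          Quot.mk _ p ∧
        (Quot.mk _ (GCcompPre P p (GCidPre P c d)) : GCHom P a b c d) =
          Quot.mk _ p) ∧
    -- hence `D⁻¹D` is a category
    ∃ inst : Category.{max u v} (GCObj D),
      ∀ X Y : GCObj D,
        @Quiver.Hom (GCObj D) (inst.toCategoryStruct.toQuiver) X Y =
          GCHom P X.fst X.snd Y.fst Y.snd := by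
  refine ⟨fun _ _ _ _ _ _ _ _ _ _ hp hq => Quot.sound (hp.comp hq),
    fun _ _ _ _ _ _ _ _ p q r => Quot.sound (GCRel_compPre_assoc P p q r),
    fun _ _ _ _ p => ⟨Quot.sound (GCRel_idPre_compPre P p), Quot.sound (GCRel_compPre_idPre P p)⟩,
    groupCompletionCategory P, fun _ _ => rfl⟩
end
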